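/- Let M be a loopless matroid of rank r on a finite ground set E and let d be an integer with 0 ≤ d < r. Then deg_M(α^{r−1−d}·β^{d}) = (−1)^d · ∑_{I ⊆ {1,…,d}} (−1)^{|I|} N_I. -/

import Mathlib

open scoped Classical
open MvPolynomial

namespace ChowPaper

variable {α : Type*}

/-- A matroid is loopless if every element of the ground set is independent as a singleton. -/
def Loopless (M : Matroid α) : Prop := ∀ a ∈ M.E, M.Indep ({a} : Set α)

/-- The (natural-number) rank of a set in a matroid: the supremum of the cardinalities of
independent subsets. -/
noncomputable def rkN (M : Matroid α) (X : Set α) : ℕ :=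
  sSup {n : ℕ | ∃ I, M.Indep I ∧ I ⊆ X ∧ I.ncard = n}

/-- Nonempty proper flats of a matroid. -/
def PFlat (M : Matroid α) (F : Set α) : Prop := M.IsFlat F ∧ F.Nonempty ∧ F ≠ M.E

/-- The index type of variables of the Chow ring: nonempty proper flats. -/
def FlatIdx (M : Matroid α) := {F : Set α // PFlat M F}

variable (R : Type*) [CommRing R]

/-- The polynomial ring `R[x_F : F a nonempty proper flat]`. -/
abbrev Pre (M : Matroid α) := MvPolynomial (FlatIdx M) R

/-- The linear form `∑_{F ∋ i} x_F`. -/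
noncomputable def alphaPre (M : Matroid α) (i : α) : Pre R M :=
  ∑ᶠ F : FlatIdx M, if i ∈ F.1 then X F else 0

/-- The linear form `∑_{F ∌ i} x_F`. -/
noncomputable def betaPre (M : Matroid α) (i : α) : Pre R M :=
  ∑ᶠ F : FlatIdx M, if i ∉ F.1 then X F else 0

/-- The defining ideal of the Chow ring of a matroid:  generated by products `x_F x_G` for
incomparable flats, and the differences `(∑_{F ∋ i} x_F) - (∑_{F ∋ j} x_F)` for `i j` in the
ground set. -/
noncomputable def chowIdeal (M : Matroid α) : Ideal (Pre R M) :=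
  Ideal.span ({p | ∃ F G : FlatIdx M, ¬ F.1 ⊆ G.1 ∧ ¬ G.1 ⊆ F.1 ∧ p = X F * X G} ∪
    {p | ∃ i ∈ M.E, ∃ j ∈ M.E, p = alphaPre R M i - alphaPre R M j})

/-- The Chow ring of a matroid. -/
abbrev Chow (M : Matroid α) := Pre R M ⧸ chowIdeal R M

/-- The quotient map onto the Chow ring. -/
noncomputable def cmk (M : Matroid α) : Pre R M →+* Chow R M :=
  Ideal.Quotient.mk (chowIdeal R M)

/-- The class `x_F` of a nonempty proper flat in the Chow ring. -/
noncomputable def xcls (M : Matroid α) (F : FlatIdx M) : Chow R M := cmk R M (X F)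

/-- The class `x_F` for any set, with the convention that `x_F = 1` when `F` is not a nonempty
proper flat (in particular `x_∅ = x_E = 1`). -/
noncomputable def xv (M : Matroid α) (F : Set α) : Chow R M :=
  if h : PFlat M F then xcls R M ⟨F, h⟩ else 1

/-- The class `α = ∑_{F ∋ i} x_F` in the Chow ring. -/
noncomputable def alpha (M : Matroid α) (i : α) : Chow R M := cmk R M (alphaPre R M i)

/-- The class `β = ∑_{F ∌ i} x_F` in the Chow ring. -/
noncomputable def beta (M : Matroid α) (i : α) : Chow R M := cmk R M (betaPre R M i)

/-- The class `α_S = α - ∑_{S ⊆ F} x_F`. -/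
noncomputable def alphaS (M : Matroid α) (i : α) (S : Set α) : Chow R M :=
  alpha R M i - cmk R M (∑ᶠ F : FlatIdx M, if S ⊆ F.1 then X F else 0)

/-- The class `β_S = β - ∑_{F ⊆ E \ S} x_F`. -/
noncomputable def betaS (M : Matroid α) (i : α) (S : Set α) : Chow R M :=
  beta R M i - cmk R M (∑ᶠ F : FlatIdx M, if F.1 ⊆ M.E \ S then X F else 0)

/-- The sum of the classes of all flats of a given rank `n`. -/
noncomputable def flatsOfRank (M : Matroid α) (n : ℕ) : Chow R M :=
  cmk R M (∑ᶠ F : FlatIdx M, if rkN M F.1 = n then X F else 0)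

/-- The degree-1 class with coefficients `c`, i.e. `∑_F c_F x_F`. -/
noncomputable def lin (M : Matroid α) (c : FlatIdx M → R) : Chow R M :=
  cmk R M (∑ᶠ F : FlatIdx M, MvPolynomial.C (c F) * X F)

/-- `deg` is a degree map for a rank-`r` matroid if it is linear and sends the monomial of every
complete flag `F_1 ⊊ ⋯ ⊊ F_{r-1}` of nonempty proper flats to `1`.  (By Adiprasito–Huh–Katz such
a map exists and its values on the degree-`(r-1)` part of the Chow ring are uniquely
determined.) -/
def IsDegMap (M : Matroid α) (r : ℕ) (deg : Chow R M →ₗ[R] R) : Prop :=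
  ∀ G : Fin (r - 1) → FlatIdx M, (StrictMono fun t => (G t).1) →
    deg (cmk R M (∏ t, X (G t))) = 1

/-- A finite set of subsets is a flag of (nonempty proper) flats if all members are nonempty
proper flats and they are pairwise comparable. -/
def IsFlagF (M : Matroid α) (S : Finset (Set α)) : Prop :=
  (∀ F ∈ S, PFlat M F) ∧ ∀ F ∈ S, ∀ G ∈ S, F ⊆ G ∨ G ⊆ F

/-- A finite set of nonempty proper flats is a flag if its members are pairwise comparable. -/
def IsFlagIdx (M : Matroid α) (S : Finset (FlatIdx M)) : Prop :=
  ∀ F ∈ S, ∀ G ∈ S, F.1 ⊆ G.1 ∨ G.1 ⊆ F.1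

/-- `N_I`: the number of flags of nonempty proper flats whose set of ranks is exactly `I`. -/
noncomputable def Ncount (M : Matroid α) (I : Finset ℕ) : ℕ :=
  {S : Finset (Set α) | IsFlagF M S ∧ S.image (rkN M) = I}.ncard

/-- `N_{I,s}`: the number of flags of nonempty proper flats with rank set `I` none of whose
members contains `s` (equivalently, whose maximal member does not contain `s`). -/
noncomputable def NcountS (M : Matroid α) (I : Finset ℕ) (s : α) : ℕ :=
  {S : Finset (Set α) | IsFlagF M S ∧ S.image (rkN M) = I ∧ ∀ F ∈ S, s ∉ F}.ncard

/-- Combinatorial nefness (property (P3)): for every flag there is a representation with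
coefficients vanishing on the flag and nonnegative on every flat that can be inserted into the
flag. -/
def CombNef (M : Matroid α) (ℓ : Chow ℝ M) : Prop :=
  ∀ S : Finset (FlatIdx M), IsFlagIdx M S →
    ∃ c : FlatIdx M → ℝ, ℓ = lin ℝ M c ∧ (∀ F ∈ S, c F = 0) ∧
      ∀ F : FlatIdx M, F ∉ S → (∀ G ∈ S, F.1 ⊆ G.1 ∨ G.1 ⊆ F.1) → 0 ≤ c F

/-- Combinatorial ampleness: as nefness, with strictly positive coefficients on insertable
flats. -/
def CombAmple (M : Matroid α) (ℓ : Chow ℝ M) : Prop :=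
  ∀ S : Finset (FlatIdx M), IsFlagIdx M S →
    ∃ c : FlatIdx M → ℝ, ℓ = lin ℝ M c ∧ (∀ F ∈ S, c F = 0) ∧
      ∀ F : FlatIdx M, F ∉ S → (∀ G ∈ S, F.1 ⊆ G.1 ∨ G.1 ⊆ F.1) → 0 < c F

/-- Property (P2): for every flag there is a representation with coefficients vanishing on the
flag and nonnegative on all nonempty proper flats. -/
def P2 (M : Matroid α) (ℓ : Chow ℝ M) : Prop :=
  ∀ S : Finset (FlatIdx M), IsFlagIdx M S →
    ∃ c : FlatIdx M → ℝ, ℓ = lin ℝ M c ∧ (∀ F ∈ S, c F = 0) ∧ ∀ F : FlatIdx M, 0 ≤ c F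

/-- The fake effective cone: classes with nonnegative degree against every product of `r - 2`
combinatorially nef classes. -/
noncomputable def FakeEff (M : Matroid α) (r : ℕ) (deg : Chow ℝ M →ₗ[ℝ] ℝ) : Set (Chow ℝ M) :=
  {D | ∀ L : Fin (r - 2) → Chow ℝ M, (∀ t, CombNef M (L t)) → 0 ≤ deg (D * ∏ t, L t)}

/-- The matroid base polytope, as a subset of `α → ℝ`: the convex hull of the indicator
vectors of the bases. -/
noncomputable def polytope (M : Matroid α) : Set (α → ℝ) :=
  convexHull ℝ {x | ∃ B, M.IsBase B ∧ x = B.indicator 1}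

/-- The flag-counting function `N̂_{𝓕,I}` of Theorem 6.2: the number of flags of nonempty proper
flats with rank set `I`, disjoint from `𝓕` and forming a flag of flats together with `𝓕`,
provided every member of `𝓕` is a flat; and `0` otherwise. -/
noncomputable def Nhat (M : Matroid α) (Fl : Finset (Set α)) (I : Finset ℕ) : ℤ :=
  if ∀ F ∈ Fl, M.IsFlat F then
    ({G : Finset (Set α) | IsFlagF M G ∧ G.image (rkN M) = I ∧ Disjoint G Fl ∧
      IsFlagF M (G ∪ Fl)}).ncard
  else 0


/-! ### Rank theory for `rkN` -/

section RankTheory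

variable {M : Matroid α} {X Y F G I J : Set α} {x i : α}

lemma rk_bddAbove (hfin : M.E.Finite) (X : Set α) :
    BddAbove {n : ℕ | ∃ I, M.Indep I ∧ I ⊆ X ∧ I.ncard = n} := by
  refine ⟨M.E.ncard, ?_⟩
  rintro n ⟨I, hI, -, rfl⟩
  exact Set.ncard_le_ncard hI.subset_ground hfin

lemma rk_zero_mem (M : Matroid α) (X : Set α) :
    (0 : ℕ) ∈ {n : ℕ | ∃ I, M.Indep I ∧ I ⊆ X ∧ I.ncard = n} :=
  ⟨∅, M.empty_indep, Set.empty_subset _, by simp⟩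

lemma le_rkN (hfin : M.E.Finite) (hI : M.Indep I) (hIX : I ⊆ X) : I.ncard ≤ rkN M X :=
  le_csSup (rk_bddAbove hfin X) ⟨I, hI, hIX, rfl⟩

lemma rkN_eq_of_basis (hfin : M.E.Finite) (hIX : M.IsBasis I X) : rkN M X = I.ncard := by
  refine le_antisymm (csSup_le ⟨0, rk_zero_mem M X⟩ ?_) (le_rkN hfin hIX.indep hIX.subset)
  rintro n ⟨J, hJ, hJX, rfl⟩
  by_contra hlt
  push_neg at hlt
  have hJfin : J.Finite := hfin.subset hJ.subset_ground
  have hIfin : I.Finite := hfin.subset hIX.indep.subset_ground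
  have hcard : I.encard < J.encard := by
    rw [← hIfin.cast_ncard_eq, ← hJfin.cast_ncard_eq]
    exact_mod_cast hlt
  obtain ⟨y, hy, hyI⟩ := hIX.indep.augment hJ hcard
  exact hy.2 (hIX.mem_of_insert_indep (hJX hy.1) hyI)

lemma rkN_mono (hfin : M.E.Finite) (h : X ⊆ Y) : rkN M X ≤ rkN M Y := by
  refine csSup_le_csSup (rk_bddAbove hfin Y) ⟨0, rk_zero_mem M X⟩ ?_
  rintro n ⟨I, hI, hIX, rfl⟩
  exact ⟨I, hI, hIX.trans h, rfl⟩

lemma rkN_closure_eq (hfin : M.E.Finite) (hX : X ⊆ M.E) :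
    rkN M (M.closure X) = rkN M X := by
  obtain ⟨I, hI⟩ := M.exists_isBasis X hX
  rw [rkN_eq_of_basis hfin hI.isBasis_closure_right, rkN_eq_of_basis hfin hI]

lemma rkN_flat_lt (hfin : M.E.Finite) (hF : M.IsFlat F) (hG : M.IsFlat G) (hss : F ⊂ G) :
    rkN M F < rkN M G := by
  obtain ⟨I, hI⟩ := M.exists_isBasis F hF.subset_ground
  obtain ⟨x, hxG, hxF⟩ := Set.exists_of_ssubset hss
  have hxI : x ∉ I := fun h => hxF (hI.subset h)
  have hxcl : x ∈ M.E \ M.closure I := by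
    rw [hI.closure_eq_closure, hF.closure]
    exact ⟨hG.subset_ground hxG, hxF⟩
  have hins : M.Indep (insert x I) := (hI.indep.insert_indep_iff_of_notMem hxI).2 hxcl
  have hIfin : I.Finite := hfin.subset hI.indep.subset_ground
  have h1 : (insert x I).ncard = I.ncard + 1 := Set.ncard_insert_of_notMem hxI hIfin
  have h2 : (insert x I).ncard ≤ rkN M G :=
    le_rkN hfin hins (Set.insert_subset hxG (hI.subset.trans hss.subset))
  rw [rkN_eq_of_basis hfin hI]
  omega

lemma rkN_flat_strictmono_le (hfin : M.E.Finite) (hF : M.IsFlat F) (hG : M.IsFlat G)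
    (hss : F ⊆ G) (hrk : rkN M G ≤ rkN M F) : F = G := by
  by_contra hne
  exact absurd hrk (not_le.2 (rkN_flat_lt hfin hF hG (hss.ssubset_of_ne hne)))

lemma closure_flat' (M : Matroid α) (X : Set α) : M.IsFlat (M.closure X) := by
  rw [Matroid.closure_def]
  have hne : Nonempty {F : Set α // F ∈ {F | M.IsFlat F ∧ X ∩ M.E ⊆ F}} :=
    ⟨⟨M.E, M.ground_isFlat, Set.inter_subset_right⟩⟩
  rw [Set.sInter_eq_iInter]
  exact Matroid.IsFlat.iInter (fun F => F.2.1)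

lemma closure_empty_loopless (hloop : Loopless M) : M.closure ∅ = ∅ := by
  rw [Set.eq_empty_iff_forall_notMem]
  intro x hx
  have hxE : x ∈ M.E := M.closure_subset_ground ∅ hx
  have := (M.empty_indep.mem_closure_iff).1 hx
  rcases this with h | h
  · have hxe : insert x (∅ : Set α) = {x} := by simp
    rw [hxe] at h
    exact h.not_indep (hloop x hxE)
  · exact h

lemma flat_empty_loopless (hloop : Loopless M) : M.IsFlat (∅ : Set α) := by
  have := closure_flat' M ∅
  rwa [closure_empty_loopless hloop] at this

lemma rkN_empty (M : Matroid α) : rkN M (∅ : Set α) = 0 := by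
  refine le_antisymm (csSup_le ⟨0, rk_zero_mem M ∅⟩ ?_) (Nat.zero_le _)
  rintro n ⟨I, -, hI, rfl⟩
  simp [Set.subset_empty_iff.1 hI]

lemma one_le_rkN_of_mem (hfin : M.E.Finite) (hloop : Loopless M) (hxX : x ∈ X)
    (hX : X ⊆ M.E) : 1 ≤ rkN M X := by
  have := le_rkN (M := M) hfin (hloop x (hX hxX)) (Set.singleton_subset_iff.2 hxX)
  simpa using this

lemma rkN_closure_insert (hfin : M.E.Finite) (hF : M.IsFlat F) (hxE : x ∈ M.E) (hxF : x ∉ F) :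
    rkN M (M.closure (insert x F)) = rkN M F + 1 := by
  obtain ⟨I, hI⟩ := M.exists_isBasis F hF.subset_ground
  have hxI : x ∉ I := fun h => hxF (hI.subset h)
  have hins : M.Indep (insert x I) := by
    refine (hI.indep.insert_indep_iff_of_notMem hxI).2 ?_
    rw [hI.closure_eq_closure, hF.closure]
    exact ⟨hxE, hxF⟩
  have hbas : M.IsBasis (insert x I) (insert x F) := hI.insert_isBasis_insert hins
  have hIfin : I.Finite := hfin.subset hI.indep.subset_ground
  rw [rkN_eq_of_basis hfin hbas.isBasis_closure_right, rkN_eq_of_basis hfin hI,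
    Set.ncard_insert_of_notMem hxI hIfin]

lemma closure_singleton_flat (i : α) : M.IsFlat (M.closure {i}) := closure_flat' M _

lemma mem_closure_singleton (hiE : i ∈ M.E) : i ∈ M.closure {i} :=
  M.subset_closure {i} (Set.singleton_subset_iff.2 hiE) rfl

lemma rkN_closure_singleton (hfin : M.E.Finite) (hloop : Loopless M) (hiE : i ∈ M.E) :
    rkN M (M.closure {i}) = 1 := by
  have hind : M.Indep {i} := hloop i hiE
  have hbas : M.IsBasis {i} (M.closure {i}) := hind.isBasis_self.isBasis_closure_right
  rw [rkN_eq_of_basis hfin hbas]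
  simp

lemma flats_finite (hfin : M.E.Finite) : {F : Set α | M.IsFlat F}.Finite :=
  (hfin.finite_subsets).subset (fun _ hF => hF.subset_ground)

lemma flat_subset_of_subset (hG : M.IsFlat G) (hXG : X ⊆ G) : M.closure X ⊆ G := by
  have := M.closure_subset_closure hXG
  rwa [hG.closure] at this

end RankTheory


/-! ### Chow ring algebra -/

section Algebra

variable {M : Matroid α} {i j : α}

lemma flatIdx_finite (hfin : M.E.Finite) : Finite (FlatIdx M) :=
  Set.Finite.to_subtype ((flats_finite hfin).subset (fun _ hF => hF.1))

/-- The monomial of a finite set of flats in the Chow ring. -/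
noncomputable def mon (M : Matroid α) (S : Finset (FlatIdx M)) : Chow ℤ M :=
  cmk ℤ M (∏ F ∈ S, X F)

lemma mon_empty (M : Matroid α) : mon M ∅ = 1 := by
  simp [mon, cmk]

lemma cmk_X_mul_X_eq_zero {F G : FlatIdx M} (h1 : ¬ F.1 ⊆ G.1) (h2 : ¬ G.1 ⊆ F.1) :
    cmk ℤ M (X F * X G) = 0 := by
  refine Ideal.Quotient.eq_zero_iff_mem.2 (Ideal.subset_span ?_)
  exact Or.inl ⟨F, G, h1, h2, rfl⟩

lemma alpha_basepoint_eq (hi : i ∈ M.E) (hj : j ∈ M.E) :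
    alpha ℤ M i = alpha ℤ M j := by
  refine Ideal.Quotient.eq.2 (Ideal.subset_span ?_)
  exact Or.inr ⟨i, hi, j, hj, rfl⟩

lemma alphaPre_add_betaPre (hfin : M.E.Finite) (i : α) :
    alphaPre ℤ M i + betaPre ℤ M i = ∑ᶠ F : FlatIdx M, X F := by
  haveI := flatIdx_finite hfin
  haveI := Fintype.ofFinite (FlatIdx M)
  rw [alphaPre, betaPre, finsum_eq_sum_of_fintype, finsum_eq_sum_of_fintype,
    finsum_eq_sum_of_fintype, ← Finset.sum_add_distrib]
  refine Finset.sum_congr rfl (fun F _ => ?_)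
  by_cases h : i ∈ F.1 <;> simp [h]

lemma beta_basepoint_eq (hfin : M.E.Finite) (hi : i ∈ M.E) (hj : j ∈ M.E) :
    beta ℤ M i = beta ℤ M j := by
  have h1 : betaPre ℤ M i - betaPre ℤ M j = alphaPre ℤ M j - alphaPre ℤ M i := by
    have e1 := alphaPre_add_betaPre (M := M) hfin i
    have e2 := alphaPre_add_betaPre (M := M) hfin j
    have : alphaPre ℤ M i + betaPre ℤ M i = alphaPre ℤ M j + betaPre ℤ M j := by rw [e1, e2]
    linear_combination this
  refine Ideal.Quotient.eq.2 ?_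
  rw [h1]
  exact Ideal.subset_span (Or.inr ⟨j, hj, i, hi, rfl⟩)

lemma cmk_X_mul_prod_eq_zero {S : Finset (FlatIdx M)} {H F : FlatIdx M} (hF : F ∈ S)
    (h1 : ¬ H.1 ⊆ F.1) (h2 : ¬ F.1 ⊆ H.1) :
    cmk ℤ M (X H * ∏ G ∈ S, X G) = 0 := by
  rw [← Finset.mul_prod_erase S _ hF, ← mul_assoc, map_mul, cmk_X_mul_X_eq_zero h1 h2,
    zero_mul]

lemma beta_mul_mon [Fintype (FlatIdx M)] (hfin : M.E.Finite) {S : Finset (FlatIdx M)} {i' : α}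
    (hi : i ∈ M.E) (hi' : i' ∈ M.E) (hmem : ∀ F ∈ S, i' ∈ F.1) :
    beta ℤ M i * mon M S =
      ∑ H ∈ Finset.univ.filter (fun H : FlatIdx M => i' ∉ H.1 ∧ ∀ F ∈ S, H.1 ⊂ F.1),
        mon M (insert H S) := by
  rw [beta_basepoint_eq hfin hi hi']
  have e1 : beta ℤ M i' * mon M S
      = ∑ H : FlatIdx M, cmk ℤ M ((if i' ∉ H.1 then X H else 0) * ∏ F ∈ S, X F) := by
    rw [beta, betaPre, finsum_eq_sum_of_fintype, map_sum, Finset.sum_mul]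
    exact Finset.sum_congr rfl (fun H _ => (map_mul _ _ _).symm)
  have e2 : ∀ H : FlatIdx M, cmk ℤ M ((if i' ∉ H.1 then X H else 0) * ∏ F ∈ S, X F)
      = if i' ∉ H.1 then cmk ℤ M (X H * ∏ F ∈ S, X F) else 0 := by
    intro H
    split_ifs <;> simp
  rw [e1, Finset.sum_congr rfl (fun H _ => e2 H), Finset.sum_ite, Finset.sum_const_zero,
    add_zero]
  have hsub : Finset.univ.filter (fun H : FlatIdx M => i' ∉ H.1 ∧ ∀ F ∈ S, H.1 ⊂ F.1)
      ⊆ Finset.univ.filter (fun H : FlatIdx M => i' ∉ H.1) := by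
    intro H hH
    rw [Finset.mem_filter] at hH ⊢
    exact ⟨hH.1, hH.2.1⟩
  have hzero : ∀ H ∈ Finset.univ.filter (fun H : FlatIdx M => i' ∉ H.1),
      H ∉ Finset.univ.filter (fun H : FlatIdx M => i' ∉ H.1 ∧ ∀ F ∈ S, H.1 ⊂ F.1) →
      cmk ℤ M (X H * ∏ F ∈ S, X F) = 0 := by
    intro H hH hHn
    rw [Finset.mem_filter] at hH hHn
    have hiH : i' ∉ H.1 := hH.2
    have : ∃ F ∈ S, ¬ H.1 ⊂ F.1 := by
      by_contra hall
      push_neg at hall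
      exact hHn ⟨Finset.mem_univ _, hiH, hall⟩
    obtain ⟨F, hFS, hnss⟩ := this
    have h2 : ¬ F.1 ⊆ H.1 := fun hFH => hiH (hFH (hmem F hFS))
    have h1 : ¬ H.1 ⊆ F.1 := by
      intro hHF
      exact hnss (HasSubset.Subset.ssubset_of_ne hHF (fun he => h2 (he ▸ subset_rfl)))
    exact cmk_X_mul_prod_eq_zero hFS h1 h2
  rw [← Finset.sum_subset hsub hzero]
  refine Finset.sum_congr rfl (fun H hH => ?_)
  rw [Finset.mem_filter] at hH
  have hHS : H ∉ S := fun hHS => (hH.2.2 H hHS).ne rfl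
  rw [mon, Finset.prod_insert hHS]

lemma alpha_mul_mon [Fintype (FlatIdx M)] (hfin : M.E.Finite) {S : Finset (FlatIdx M)} {j' : α}
    (hi : i ∈ M.E) (hj' : j' ∈ M.E) (hmem : ∀ F ∈ S, j' ∉ F.1) :
    alpha ℤ M i * mon M S =
      ∑ H ∈ Finset.univ.filter (fun H : FlatIdx M => j' ∈ H.1 ∧ ∀ F ∈ S, F.1 ⊂ H.1),
        mon M (insert H S) := by
  rw [alpha_basepoint_eq hi hj']
  have e1 : alpha ℤ M j' * mon M S
      = ∑ H : FlatIdx M, cmk ℤ M ((if j' ∈ H.1 then X H else 0) * ∏ F ∈ S, X F) := by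
    rw [alpha, alphaPre, finsum_eq_sum_of_fintype, map_sum, Finset.sum_mul]
    exact Finset.sum_congr rfl (fun H _ => (map_mul _ _ _).symm)
  have e2 : ∀ H : FlatIdx M, cmk ℤ M ((if j' ∈ H.1 then X H else 0) * ∏ F ∈ S, X F)
      = if j' ∈ H.1 then cmk ℤ M (X H * ∏ F ∈ S, X F) else 0 := by
    intro H
    split_ifs <;> simp
  rw [e1, Finset.sum_congr rfl (fun H _ => e2 H), Finset.sum_ite, Finset.sum_const_zero,
    add_zero]
  have hsub : Finset.univ.filter (fun H : FlatIdx M => j' ∈ H.1 ∧ ∀ F ∈ S, F.1 ⊂ H.1)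
      ⊆ Finset.univ.filter (fun H : FlatIdx M => j' ∈ H.1) := by
    intro H hH
    rw [Finset.mem_filter] at hH ⊢
    exact ⟨hH.1, hH.2.1⟩
  have hzero : ∀ H ∈ Finset.univ.filter (fun H : FlatIdx M => j' ∈ H.1),
      H ∉ Finset.univ.filter (fun H : FlatIdx M => j' ∈ H.1 ∧ ∀ F ∈ S, F.1 ⊂ H.1) →
      cmk ℤ M (X H * ∏ F ∈ S, X F) = 0 := by
    intro H hH hHn
    rw [Finset.mem_filter] at hH hHn
    have hjH : j' ∈ H.1 := hH.2
    have : ∃ F ∈ S, ¬ F.1 ⊂ H.1 := by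
      by_contra hall
      push_neg at hall
      exact hHn ⟨Finset.mem_univ _, hjH, hall⟩
    obtain ⟨F, hFS, hnss⟩ := this
    have h1 : ¬ H.1 ⊆ F.1 := fun hHF => (hmem F hFS) (hHF hjH)
    have h2 : ¬ F.1 ⊆ H.1 := by
      intro hFH
      exact hnss (HasSubset.Subset.ssubset_of_ne hFH (fun he => h1 (he ▸ subset_rfl)))
    exact cmk_X_mul_prod_eq_zero hFS h1 h2
  rw [← Finset.sum_subset hsub hzero]
  refine Finset.sum_congr rfl (fun H hH => ?_)
  rw [Finset.mem_filter] at hH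
  have hHS : H ∉ S := fun hHS => (hH.2.2 H hHS).ne rfl
  rw [mon, Finset.prod_insert hHS]

end Algebra

/-! ### Flag counting -/

section Counting

variable {M : Matroid α} {F G H K : Set α} {i' : α}

/-- The finite set of all flats. -/
noncomputable def flatFS (M : Matroid α) (hfin : M.E.Finite) : Finset (Set α) :=
  (flats_finite hfin).toFinset

lemma mem_flatFS {hfin : M.E.Finite} : F ∈ flatFS M hfin ↔ M.IsFlat F :=
  Set.Finite.mem_toFinset _

/-- Flags of nonempty proper flats all strictly below `G` with ranks at most `b`. -/
noncomputable def FlagsB (M : Matroid α) (hfin : M.E.Finite) (b : ℕ) (G : Set α) :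
    Finset (Finset (Set α)) :=
  (flatFS M hfin).powerset.filter
    (fun 𝓕 => IsFlagF M 𝓕 ∧ ∀ F ∈ 𝓕, F ⊂ G ∧ rkN M F ≤ b)

lemma mem_FlagsB {hfin : M.E.Finite} {b : ℕ} {𝓕 : Finset (Set α)} :
    𝓕 ∈ FlagsB M hfin b G ↔ IsFlagF M 𝓕 ∧ ∀ F ∈ 𝓕, F ⊂ G ∧ rkN M F ≤ b := by
  rw [FlagsB, Finset.mem_filter, Finset.mem_powerset]
  constructor
  · rintro ⟨-, h⟩; exact h
  · intro h
    exact ⟨fun F hF => mem_flatFS.2 (h.1.1 F hF).1, h⟩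

/-- The signed count of flags below `G` with ranks at most `b`. -/
noncomputable def Qc (M : Matroid α) (hfin : M.E.Finite) (b : ℕ) (G : Set α) : ℤ :=
  ∑ 𝓕 ∈ FlagsB M hfin b G, (-1) ^ 𝓕.card

lemma PFlat.one_le_rkN (hfin : M.E.Finite) (hloop : Loopless M) (hF : PFlat M F) :
    1 ≤ rkN M F := by
  obtain ⟨x, hx⟩ := hF.2.1
  exact one_le_rkN_of_mem hfin hloop hx hF.1.subset_ground

lemma Qc_zero (hfin : M.E.Finite) (hloop : Loopless M) (G : Set α) : Qc M hfin 0 G = 1 := by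
  have h : FlagsB M hfin 0 G = {∅} := by
    rw [Finset.eq_singleton_iff_unique_mem]
    constructor
    · rw [mem_FlagsB]
      exact ⟨⟨fun F hF => absurd hF (Finset.notMem_empty F),
        fun F hF => absurd hF (Finset.notMem_empty F)⟩,
        fun F hF => absurd hF (Finset.notMem_empty F)⟩
    · intro 𝓕 h𝓕
      rw [mem_FlagsB] at h𝓕
      rw [Finset.eq_empty_iff_forall_notMem]
      intro F hF
      have h1 := PFlat.one_le_rkN hfin hloop (h𝓕.1.1 F hF)
      have h2 := (h𝓕.2 F hF).2
      omega
  rw [Qc, h, Finset.sum_singleton, Finset.card_empty, pow_zero]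

lemma flag_eq_of_comparable (hfin : M.E.Finite) (hF : M.IsFlat F) (hG : M.IsFlat G)
    (hcomp : F ⊆ G ∨ G ⊆ F) (hrk : rkN M F = rkN M G) : F = G := by
  rcases hcomp with h | h
  · exact rkN_flat_strictmono_le hfin hF hG h (le_of_eq hrk.symm)
  · exact (rkN_flat_strictmono_le hfin hG hF h (le_of_eq hrk)).symm

lemma flag_max (hfin : M.E.Finite) {𝓕 : Finset (Set α)} (hflag : IsFlagF M 𝓕)
    (hK : K ∈ 𝓕) (hmax : ∀ F ∈ 𝓕, rkN M F ≤ rkN M K) :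
    (∀ F ∈ 𝓕, F ⊆ K) ∧ ⋃₀ (↑𝓕 : Set (Set α)) = K := by
  have hsub : ∀ F ∈ 𝓕, F ⊆ K := by
    intro F hF
    rcases hflag.2 F hF K hK with h | h
    · exact h
    · exact (rkN_flat_strictmono_le hfin (hflag.1 K hK).1 (hflag.1 F hF).1 h
        (hmax F hF)).symm.subset
  refine ⟨hsub, ?_⟩
  apply subset_antisymm
  · exact Set.sUnion_subset (fun F hF => hsub F hF)
  · exact Set.subset_sUnion_of_mem hK

lemma pflat_of_lt (hG : G ⊆ M.E) (hKflat : M.IsFlat K) (hrk : 1 ≤ rkN M K) (hKG : K ⊂ G) :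
    PFlat M K := by
  refine ⟨hKflat, ?_, ?_⟩
  · rw [Set.nonempty_iff_ne_empty]
    rintro rfl
    rw [rkN_empty] at hrk
    omega
  · rintro rfl
    exact (hKG.trans_subset hG).ne rfl

/-- Splitting off the rank-`c` member of flags: identity (P). -/
lemma Qc_split (hfin : M.E.Finite) (hloop : Loopless M) {c : ℕ} (hc : 1 ≤ c)
    (hG : G ⊆ M.E) :
    Qc M hfin c G = Qc M hfin (c-1) G
      - ∑ K ∈ (flatFS M hfin).filter (fun K => rkN M K = c ∧ K ⊂ G),
          Qc M hfin (c-1) K := by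
  classical
  have hsplit := Finset.sum_filter_add_sum_filter_not (FlagsB M hfin c G)
    (fun 𝓕 => ∀ F ∈ 𝓕, rkN M F ≠ c) (fun 𝓕 => (-1 : ℤ) ^ 𝓕.card)
  have hA : (FlagsB M hfin c G).filter (fun 𝓕 => ∀ F ∈ 𝓕, rkN M F ≠ c)
      = FlagsB M hfin (c-1) G := by
    ext 𝓕
    rw [Finset.mem_filter, mem_FlagsB, mem_FlagsB]
    constructor
    · rintro ⟨⟨hflag, hcond⟩, hne⟩
      refine ⟨hflag, fun F hF => ⟨(hcond F hF).1, ?_⟩⟩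
      have := (hcond F hF).2
      have := hne F hF
      omega
    · rintro ⟨hflag, hcond⟩
      refine ⟨⟨hflag, fun F hF => ⟨(hcond F hF).1, by have := (hcond F hF).2; omega⟩⟩,
        fun F hF => by have := (hcond F hF).2; omega⟩
  set Bset := (FlagsB M hfin c G).filter (fun 𝓕 => ¬ ∀ F ∈ 𝓕, rkN M F ≠ c) with hBset
  set 𝒦 := (flatFS M hfin).filter (fun K => rkN M K = c ∧ K ⊂ G) with h𝒦
  -- facts about members of Bset
  have hBfact : ∀ 𝓕 ∈ Bset, ∃ K ∈ 𝓕, rkN M K = c ∧ (∀ F ∈ 𝓕, F ⊆ K) ∧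
      ⋃₀ (↑𝓕 : Set (Set α)) = K := by
    intro 𝓕 h𝓕
    rw [hBset, Finset.mem_filter] at h𝓕
    obtain ⟨hmem, hex⟩ := h𝓕
    push_neg at hex
    obtain ⟨K, hK𝓕, hKc⟩ := hex
    rw [mem_FlagsB] at hmem
    have hmax : ∀ F ∈ 𝓕, rkN M F ≤ rkN M K := by
      intro F hF
      rw [hKc]
      exact (hmem.2 F hF).2
    obtain ⟨hsub, hun⟩ := flag_max hfin hmem.1 hK𝓕 hmax
    exact ⟨K, hK𝓕, hKc, hsub, hun⟩
  have hmapsto : ∀ 𝓕 ∈ Bset, ⋃₀ (↑𝓕 : Set (Set α)) ∈ 𝒦 := by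
    intro 𝓕 h𝓕
    obtain ⟨K, hK𝓕, hKc, hsub, hun⟩ := hBfact 𝓕 h𝓕
    rw [hun, h𝒦, Finset.mem_filter]
    rw [hBset, Finset.mem_filter, mem_FlagsB] at h𝓕
    exact ⟨mem_flatFS.2 (h𝓕.1.1.1 K hK𝓕).1, hKc, (h𝓕.1.2 K hK𝓕).1⟩
  have hfiber := Finset.sum_fiberwise_of_maps_to hmapsto (fun 𝓕 => (-1 : ℤ) ^ 𝓕.card)
  have hinner : ∀ K ∈ 𝒦,
      (∑ 𝓕 ∈ Bset.filter (fun 𝓕 : Finset (Set α) => ⋃₀ (↑𝓕 : Set (Set α)) = K), (-1 : ℤ) ^ 𝓕.card)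
        = - Qc M hfin (c-1) K := by
    intro K hK
    rw [h𝒦, Finset.mem_filter] at hK
    obtain ⟨hKfs, hKc, hKG⟩ := hK
    have hKflat : M.IsFlat K := mem_flatFS.1 hKfs
    have hKP : PFlat M K := pflat_of_lt hG hKflat (by omega) hKG
    rw [Qc, ← Finset.sum_neg_distrib]
    refine Finset.sum_nbij' (fun 𝓕 => 𝓕.erase K) (fun 𝓕' => insert K 𝓕') ?_ ?_ ?_ ?_ ?_
    · -- maps into FlagsB (c-1) K
      intro 𝓕 h𝓕
      rw [Finset.mem_filter] at h𝓕
      obtain ⟨h𝓕B, hunK⟩ := h𝓕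
      obtain ⟨K', hK'𝓕, hK'c, hsub, hun⟩ := hBfact 𝓕 h𝓕B
      have hKK' : K' = K := by rw [← hunK, ← hun]
      subst hKK'
      rw [hBset, Finset.mem_filter, mem_FlagsB] at h𝓕B
      rw [mem_FlagsB]
      constructor
      · exact ⟨fun F hF => h𝓕B.1.1.1 F (Finset.mem_of_mem_erase hF),
          fun F hF F' hF' => h𝓕B.1.1.2 F (Finset.mem_of_mem_erase hF)
            F' (Finset.mem_of_mem_erase hF')⟩
      · intro F hF
        have hF𝓕 := Finset.mem_of_mem_erase hF
        have hFne := Finset.ne_of_mem_erase hF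
        refine ⟨(hsub F hF𝓕).ssubset_of_ne hFne, ?_⟩
        have hFc : rkN M F ≠ c := by
          intro heq
          exact hFne (flag_eq_of_comparable hfin (h𝓕B.1.1.1 F hF𝓕).1 hKflat
            (h𝓕B.1.1.2 F hF𝓕 K' hK'𝓕) (by rw [heq, hK'c]))
        have := (h𝓕B.1.2 F hF𝓕).2
        omega
    · -- inverse maps into the fiber
      intro 𝓕' h𝓕'
      rw [mem_FlagsB] at h𝓕'
      have hKn𝓕' : K ∉ 𝓕' := fun h => (h𝓕'.2 K h).1.ne rfl
      have hflagi : IsFlagF M (insert K 𝓕') := by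
        constructor
        · intro F hF
          rcases Finset.mem_insert.1 hF with rfl | hF
          · exact hKP
          · exact h𝓕'.1.1 F hF
        · intro F hF F' hF'
          rcases Finset.mem_insert.1 hF with hFK | hF
          · rcases Finset.mem_insert.1 hF' with hF'K | hF'
            · rw [hFK, hF'K]
              exact Or.inl subset_rfl
            · rw [hFK]
              exact Or.inr ((h𝓕'.2 F' hF').1.subset)
          · rcases Finset.mem_insert.1 hF' with hF'K | hF'
            · rw [hF'K]
              exact Or.inl ((h𝓕'.2 F hF).1.subset)
            · exact h𝓕'.1.2 F hF F' hF'
      have hmax' : ∀ F ∈ insert K 𝓕', rkN M F ≤ rkN M K := by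
        intro F hF
        rcases Finset.mem_insert.1 hF with rfl | hF
        · exact le_rfl
        · have := (h𝓕'.2 F hF).2
          omega
      rw [Finset.mem_filter]
      constructor
      · rw [hBset, Finset.mem_filter, mem_FlagsB]
        refine ⟨⟨hflagi, ?_⟩, ?_⟩
        · intro F hF
          rcases Finset.mem_insert.1 hF with rfl | hF
          · exact ⟨hKG, le_of_eq hKc⟩
          · exact ⟨(h𝓕'.2 F hF).1.trans hKG, by have := (h𝓕'.2 F hF).2; omega⟩
        · push_neg
          exact ⟨K, Finset.mem_insert_self K 𝓕', hKc⟩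
      · exact (flag_max hfin hflagi (Finset.mem_insert_self K 𝓕') hmax').2
    · -- left inverse
      intro 𝓕 h𝓕
      rw [Finset.mem_filter] at h𝓕
      obtain ⟨K', hK'𝓕, hK'c, hsub, hun⟩ := hBfact 𝓕 h𝓕.1
      have hKK' : K' = K := by rw [← h𝓕.2, ← hun]
      subst hKK'
      exact Finset.insert_erase hK'𝓕
    · -- right inverse
      intro 𝓕' h𝓕'
      rw [mem_FlagsB] at h𝓕'
      exact Finset.erase_insert (fun h => (h𝓕'.2 K h).1.ne rfl)
    · -- values
      intro 𝓕 h𝓕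
      rw [Finset.mem_filter] at h𝓕
      obtain ⟨K', hK'𝓕, hK'c, hsub, hun⟩ := hBfact 𝓕 h𝓕.1
      have hKK' : K' = K := by rw [← h𝓕.2, ← hun]
      subst hKK'
      have hcard : 𝓕.card = (𝓕.erase K').card + 1 := by
        rw [Finset.card_erase_of_mem hK'𝓕]
        have : 1 ≤ 𝓕.card := Finset.card_pos.2 ⟨K', hK'𝓕⟩
        omega
      rw [hcard, pow_succ]
      ring
  have htotal : ∑ 𝓕 ∈ Bset, (-1 : ℤ) ^ 𝓕.card
      = - ∑ K ∈ 𝒦, Qc M hfin (c-1) K := by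
    rw [← hfiber, Finset.sum_congr rfl hinner, Finset.sum_neg_distrib]
  have : Qc M hfin c G = Qc M hfin (c-1) G + ∑ 𝓕 ∈ Bset, (-1 : ℤ) ^ 𝓕.card := by
    simp only [Qc]
    rw [← hsplit, hA]
  rw [this, htotal]
  ring


lemma Qc_comb_aux (hfin : M.E.Finite) (hloop : Loopless M) {b : ℕ} (hb1 : 1 ≤ b)
    {G' : Set α} (hG' : M.IsFlat G') {i' : α} (hi'G' : i' ∈ G') (hbG' : b < rkN M G')
    (hW : Qc M hfin (b-1) G' =
      ∑ H ∈ (flatFS M hfin).filter (fun H => rkN M H = b ∧ i' ∈ H ∧ H ⊆ G'),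
        Qc M hfin (b-1) H) :
    Qc M hfin b G' =
      - ∑ K ∈ ((flatFS M hfin).filter (fun K => rkN M K = b ∧ K ⊂ G')).filter
          (fun K => i' ∉ K), Qc M hfin (b-1) K := by
  classical
  have hP := Qc_split hfin hloop hb1 hG'.subset_ground
  have hs0 : (flatFS M hfin).filter (fun H => rkN M H = b ∧ i' ∈ H ∧ H ⊆ G')
      = ((flatFS M hfin).filter (fun K => rkN M K = b ∧ K ⊂ G')).filter
          (fun K => i' ∈ K) := by
    rw [Finset.filter_filter]
    ext K
    simp only [Finset.mem_filter, mem_flatFS]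
    constructor
    · rintro ⟨hKf, hrk, hiK, hsub⟩
      refine ⟨hKf, ⟨hrk, hsub.ssubset_of_ne ?_⟩, hiK⟩
      rintro rfl
      omega
    · rintro ⟨hKf, ⟨hrk, hss⟩, hiK⟩
      exact ⟨hKf, hrk, hiK, hss.subset⟩
  have hsplit2 := Finset.sum_filter_add_sum_filter_not
    ((flatFS M hfin).filter (fun K => rkN M K = b ∧ K ⊂ G')) (fun K => i' ∈ K)
    (fun K => Qc M hfin (b-1) K)
  rw [hP, hW, hs0]
  linarith [hsplit2]

lemma Qc_weisner (hfin : M.E.Finite) (hloop : Loopless M) :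
    ∀ b : ℕ, 1 ≤ b → ∀ G : Set α, M.IsFlat G → ∀ i' : α, i' ∈ G → b ≤ rkN M G →
      Qc M hfin (b-1) G =
        ∑ H ∈ (flatFS M hfin).filter (fun H => rkN M H = b ∧ i' ∈ H ∧ H ⊆ G),
          Qc M hfin (b-1) H := by
  classical
  intro b
  induction b with
  | zero => intro h; omega
  | succ b ih =>
    intro _ G hGflat i' hi'G hbG
    have hi'E : i' ∈ M.E := hGflat.subset_ground hi'G
    simp only [Nat.add_sub_cancel]
    by_cases hb0 : b = 0
    · subst hb0
      have hsing : (flatFS M hfin).filter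
          (fun H => rkN M H = 0 + 1 ∧ i' ∈ H ∧ H ⊆ G) = {M.closure {i'}} := by
        rw [Finset.eq_singleton_iff_unique_mem]
        constructor
        · rw [Finset.mem_filter, mem_flatFS]
          exact ⟨closure_singleton_flat i', by
            rw [rkN_closure_singleton hfin hloop hi'E],
            mem_closure_singleton hi'E,
            flat_subset_of_subset hGflat (Set.singleton_subset_iff.2 hi'G)⟩
        · intro H hH
          rw [Finset.mem_filter, mem_flatFS] at hH
          obtain ⟨hHflat, hHrk, hi'H, hHG⟩ := hH
          have hclH : M.closure {i'} ⊆ H :=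
            flat_subset_of_subset hHflat (Set.singleton_subset_iff.2 hi'H)
          exact (rkN_flat_strictmono_le hfin (closure_singleton_flat i') hHflat hclH
            (by rw [hHrk, rkN_closure_singleton hfin hloop hi'E])).symm
      rw [hsing, Finset.sum_singleton, Qc_zero hfin hloop, Qc_zero hfin hloop]
    · have hb1 : 1 ≤ b := by omega
      have hcomb : ∀ G' : Set α, M.IsFlat G' → i' ∈ G' → b < rkN M G' →
          Qc M hfin b G' =
            - ∑ K ∈ ((flatFS M hfin).filter (fun K => rkN M K = b ∧ K ⊂ G')).filter
                (fun K => i' ∉ K), Qc M hfin (b-1) K := by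
        intro G' hG' hi'G' hbG'
        exact Qc_comb_aux hfin hloop hb1 hG' hi'G' hbG'
          (ih hb1 G' hG' i' hi'G' (le_of_lt hbG'))
      set ℋ := (flatFS M hfin).filter (fun H => rkN M H = b + 1 ∧ i' ∈ H ∧ H ⊆ G)
        with hℋ
      have hℋfact : ∀ H ∈ ℋ, M.IsFlat H ∧ rkN M H = b + 1 ∧ i' ∈ H ∧ H ⊆ G := by
        intro H hH
        rw [hℋ, Finset.mem_filter, mem_flatFS] at hH
        exact ⟨hH.1, hH.2⟩
      have hRHS : ∀ H ∈ ℋ, Qc M hfin b H =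
          - ∑ K ∈ ((flatFS M hfin).filter (fun K => rkN M K = b ∧ K ⊂ H)).filter
              (fun K => i' ∉ K), Qc M hfin (b-1) K := by
        intro H hH
        obtain ⟨hHflat, hHrk, hi'H, -⟩ := hℋfact H hH
        exact hcomb H hHflat hi'H (by omega)
      rw [Finset.sum_congr rfl hRHS, hcomb G hGflat hi'G (by omega),
        Finset.sum_neg_distrib]
      congr 1
      -- identity (W)
      set 𝒦all := (flatFS M hfin).filter (fun K => rkN M K = b ∧ i' ∉ K) with h𝒦all
      have hconv : ∀ X : Set α,
          ((flatFS M hfin).filter (fun K => rkN M K = b ∧ K ⊂ X)).filter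
              (fun K => i' ∉ K) = 𝒦all.filter (fun K => K ⊂ X) := by
        intro X
        rw [h𝒦all, Finset.filter_filter, Finset.filter_filter]
        ext K
        simp only [Finset.mem_filter]
        tauto
      have hKfact : ∀ K ∈ 𝒦all, M.IsFlat K ∧ rkN M K = b ∧ i' ∉ K := by
        intro K hK
        rw [h𝒦all, Finset.mem_filter, mem_flatFS] at hK
        exact ⟨hK.1, hK.2⟩
      rw [hconv G, Finset.sum_filter]
      have hinner : ∀ H ∈ ℋ,
          ∑ K ∈ ((flatFS M hfin).filter (fun K => rkN M K = b ∧ K ⊂ H)).filter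
              (fun K => i' ∉ K), Qc M hfin (b-1) K
            = ∑ K ∈ 𝒦all, if K ⊂ H then Qc M hfin (b-1) K else 0 := by
        intro H _
        rw [hconv H, Finset.sum_filter]
      rw [Finset.sum_congr rfl hinner, Finset.sum_comm]
      refine Finset.sum_congr rfl (fun K hK => ?_)
      obtain ⟨hKflat, hKrk, hi'K⟩ := hKfact K hK
      by_cases hKG : K ⊂ G
      · have hKE : K ⊆ M.E := hKflat.subset_ground
        set K' := M.closure (insert i' K) with hK'
        have hK'flat : M.IsFlat K' := closure_flat' M _
        have hK'rk : rkN M K' = b + 1 := by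
          rw [hK', rkN_closure_insert hfin hKflat hi'E hi'K, hKrk]
        have hi'K' : i' ∈ K' :=
          M.subset_closure (insert i' K) (Set.insert_subset hi'E hKE)
            (Set.mem_insert _ _)
        have hKK' : K ⊂ K' := by
          refine HasSubset.Subset.ssubset_of_ne ?_ ?_
          · exact (Set.subset_insert _ _).trans
              (M.subset_closure (insert i' K) (Set.insert_subset hi'E hKE))
          · intro h
            rw [← h] at hK'rk
            omega
        have hsingH : ℋ.filter (fun H => K ⊂ H) = {K'} := by
          rw [Finset.eq_singleton_iff_unique_mem]
          constructor
          · rw [Finset.mem_filter, hℋ, Finset.mem_filter, mem_flatFS]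
            exact ⟨⟨hK'flat, hK'rk, hi'K',
              flat_subset_of_subset hGflat (Set.insert_subset hi'G hKG.subset)⟩, hKK'⟩
          · intro H hH
            rw [Finset.mem_filter] at hH
            obtain ⟨hHflat, hHrk, hi'H, hHG⟩ := hℋfact H hH.1
            have hK'H : K' ⊆ H :=
              flat_subset_of_subset hHflat (Set.insert_subset hi'H hH.2.subset)
            exact (rkN_flat_strictmono_le hfin hK'flat hHflat hK'H (by omega)).symm
        rw [if_pos hKG, ← Finset.sum_filter, hsingH, Finset.sum_singleton]
      · have hempty : ℋ.filter (fun H => K ⊂ H) = ∅ := by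
          rw [Finset.filter_eq_empty_iff]
          intro H hH
          obtain ⟨-, -, -, hHG⟩ := hℋfact H hH
          exact fun hKH => hKG (hKH.trans_subset hHG)
        rw [if_neg hKG, ← Finset.sum_filter, hempty, Finset.sum_empty]

lemma sum_flatIdx_eq [Fintype (FlatIdx M)] (hfin : M.E.Finite) {p : Set α → Prop}
    {f : Set α → ℤ} (hp : ∀ K, M.IsFlat K → p K → PFlat M K) :
    ∑ H ∈ Finset.univ.filter (fun H : FlatIdx M => p H.1), f H.1
      = ∑ K ∈ (flatFS M hfin).filter p, f K := by
  classical
  refine Finset.sum_bij (fun (H : FlatIdx M) _ => H.1) ?_ ?_ ?_ ?_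
  · intro H hH
    rw [Finset.mem_filter] at hH
    rw [Finset.mem_filter, mem_flatFS]
    exact ⟨H.2.1, hH.2⟩
  · intro H₁ h₁ H₂ h₂ h
    exact Subtype.coe_injective h
  · intro K hK
    rw [Finset.mem_filter, mem_flatFS] at hK
    exact ⟨⟨K, hp K hK.1 hK.2⟩, by refine Finset.mem_filter.2 ?_; exact ⟨Finset.mem_univ _, hK.2⟩, rfl⟩
  · intro H hH
    rfl

lemma Qc_U [Fintype (FlatIdx M)] (hfin : M.E.Finite) (hloop : Loopless M) {b : ℕ}
    (hb : 1 ≤ b) {G : Set α} (hGflat : M.IsFlat G) {i' : α} (hi'G : i' ∈ G)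
    (hbG : b < rkN M G) :
    Qc M hfin b G =
      - ∑ H ∈ Finset.univ.filter
          (fun H : FlatIdx M => rkN M H.1 = b ∧ H.1 ⊂ G ∧ i' ∉ H.1),
        Qc M hfin (b-1) H.1 := by
  classical
  have hcomb := Qc_comb_aux hfin hloop hb hGflat hi'G hbG
    (Qc_weisner hfin hloop b hb G hGflat i' hi'G (le_of_lt hbG))
  rw [hcomb]
  congr 1
  refine (Finset.sum_bij (fun (H : FlatIdx M) (_ : H ∈ Finset.univ.filter
      (fun H : FlatIdx M => rkN M H.1 = b ∧ H.1 ⊂ G ∧ i' ∉ H.1)) => H.1)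
    ?_ ?_ ?_ ?_).symm
  · intro H hH
    rw [Finset.mem_filter] at hH
    rw [Finset.mem_filter, Finset.mem_filter, mem_flatFS]
    exact ⟨⟨H.2.1, hH.2.1, hH.2.2.1⟩, hH.2.2.2⟩
  · intro H₁ h₁ H₂ h₂ h
    exact Subtype.coe_injective h
  · intro K hK
    rw [Finset.mem_filter, Finset.mem_filter, mem_flatFS] at hK
    have hKP : PFlat M K :=
      pflat_of_lt hGflat.subset_ground hK.1.1 (by omega) hK.1.2.2
    refine ⟨⟨K, hKP⟩, ?_, rfl⟩
    refine Finset.mem_filter.2 ?_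
    exact ⟨Finset.mem_univ _, hK.1.2.1, hK.1.2.2, hK.2⟩
  · intro H hH
    rfl

end Counting


/-! ### Degree computations -/

section Degree

variable {M : Matroid α} {i : α} {r : ℕ} {deg : Chow ℤ M →ₗ[ℤ] ℤ}

lemma flagIdx_rk_inj (hfin : M.E.Finite) {S : Finset (FlatIdx M)} (hflag : IsFlagIdx M S)
    {F F' : FlatIdx M} (hF : F ∈ S) (hF' : F' ∈ S) (hrk : rkN M F.1 = rkN M F'.1) :
    F = F' :=
  Subtype.coe_injective
    (flag_eq_of_comparable hfin F.2.1 F'.2.1 (hflag F hF F' hF') hrk)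

lemma rk_lt_top (hfin : M.E.Finite) {F : FlatIdx M} : rkN M F.1 < rkN M M.E := by
  have hle : rkN M F.1 ≤ rkN M M.E := rkN_mono hfin F.2.1.subset_ground
  rcases lt_or_eq_of_le hle with h | h
  · exact h
  · exact absurd (rkN_flat_strictmono_le hfin F.2.1 M.ground_isFlat
      F.2.1.subset_ground (le_of_eq h.symm)) F.2.2.2

lemma ground_nonempty_of_rk (hr : rkN M M.E = r) (hrpos : 1 ≤ r) : M.E.Nonempty := by
  rcases Set.eq_empty_or_nonempty M.E with h | h
  · rw [h, rkN_empty] at hr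
    omega
  · exact h

lemma degA [Fintype (FlatIdx M)] (hfin : M.E.Finite) (hloop : Loopless M)
    (hr : rkN M M.E = r) (hi : i ∈ M.E) (hdeg : IsDegMap ℤ M r deg) :
    ∀ a : ℕ, ∀ S : Finset (FlatIdx M), IsFlagIdx M S → a + S.card = r - 1 →
      deg (mon M S * alpha ℤ M i ^ a)
        = if S.image (fun F => rkN M F.1) = Finset.Icc 1 S.card then 1 else 0 := by
  classical
  intro a
  induction a with
  | zero =>
    intro S hflag hcard
    rw [zero_add] at hcard
    have hrle : ∀ F ∈ S, 1 ≤ rkN M F.1 ∧ rkN M F.1 ≤ r - 1 := by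
      intro F hF
      have h1 : 1 ≤ rkN M F.1 := PFlat.one_le_rkN hfin hloop F.2
      have h2 : rkN M F.1 < rkN M M.E := rk_lt_top hfin
      rw [hr] at h2
      exact ⟨h1, by omega⟩
    have himg : S.image (fun F => rkN M F.1) = Finset.Icc 1 S.card := by
      have hsub : S.image (fun F => rkN M F.1) ⊆ Finset.Icc 1 (r-1) := by
        intro n hn
        rw [Finset.mem_image] at hn
        obtain ⟨F, hF, rfl⟩ := hn
        rw [Finset.mem_Icc]
        exact (hrle F hF)
      have hcardimg : (S.image (fun F => rkN M F.1)).card = S.card :=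
        Finset.card_image_of_injOn (fun F hF F' hF' h => flagIdx_rk_inj hfin hflag hF hF' h)
      rw [hcard]
      refine Finset.eq_of_subset_of_card_le hsub ?_
      rw [Nat.card_Icc, hcardimg, hcard]
      omega
    rw [if_pos himg, pow_zero, mul_one]
    -- build the enumeration of the flag
    have hexu : ∀ t : Fin (r-1), ∃! F, F ∈ S ∧ rkN M F.1 = (t : ℕ) + 1 := by
      intro t
      have ht : (t : ℕ) + 1 ∈ Finset.Icc 1 S.card := by
        rw [Finset.mem_Icc, hcard]
        exact ⟨by omega, t.2⟩
      rw [← himg, Finset.mem_image] at ht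
      obtain ⟨F, hF, hFrk⟩ := ht
      refine ⟨F, ⟨hF, hFrk⟩, ?_⟩
      rintro F' ⟨hF', hF'rk⟩
      exact flagIdx_rk_inj hfin hflag hF' hF (by rw [hFrk, hF'rk])
    set Gf : Fin (r-1) → FlatIdx M :=
      fun t => Finset.choose (fun F => rkN M F.1 = (t : ℕ) + 1) S (hexu t) with hGf
    have hGmem : ∀ t, Gf t ∈ S := fun t => Finset.choose_mem _ _ _
    have hGrk : ∀ t, rkN M (Gf t).1 = (t : ℕ) + 1 :=
      fun t => Finset.choose_property (fun F => rkN M F.1 = (t : ℕ) + 1) S (hexu t)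
    have hmono : StrictMono (fun t => (Gf t).1) := by
      intro s t hst
      have hne : rkN M (Gf s).1 < rkN M (Gf t).1 := by
        rw [hGrk, hGrk]
        omega
      rcases hflag (Gf s) (hGmem s) (Gf t) (hGmem t) with h | h
      · exact h.ssubset_of_ne (fun he => by rw [he] at hne; omega)
      · exfalso
        have := rkN_mono (M := M) hfin h
        omega
    have hprod : (∏ t, X (Gf t) : Pre ℤ M) = ∏ F ∈ S, X F := by
      refine Finset.prod_bij (fun t _ => Gf t) (fun t _ => hGmem t) ?_ ?_ (fun _ _ => rfl)
      · intro t₁ h₁ t₂ h₂ h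
        have h' : Gf t₁ = Gf t₂ := h
        have h1 := hGrk t₁
        have h2 := hGrk t₂
        rw [h'] at h1
        rw [h1] at h2
        exact Fin.ext (by omega)
      · intro F hF
        have hrkF : rkN M F.1 ∈ Finset.Icc 1 S.card := by
          rw [← himg]
          exact Finset.mem_image_of_mem _ hF
        rw [Finset.mem_Icc, hcard] at hrkF
        refine ⟨⟨rkN M F.1 - 1, by omega⟩, Finset.mem_univ _, ?_⟩
        refine flagIdx_rk_inj hfin hflag (hGmem _) hF ?_
        rw [hGrk]
        simp only []
        omega
    rw [mon, ← hprod]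
    exact hdeg Gf hmono
  | succ a iha =>
    intro S hflag hcard
    set k := S.card with hk
    -- produce the `max' data
    have hGex : ∃ G : Set α, M.IsFlat G ∧ (∀ F ∈ S, F.1 ⊆ G) ∧ G ⊂ M.E ∧
        (S.image (fun F => rkN M F.1) = Finset.Icc 1 k → rkN M G = k) ∧
        (∀ H : FlatIdx M, (∀ F ∈ S, F.1 ⊂ H.1) → G ⊆ H.1) := by
      rcases Finset.eq_empty_or_nonempty S with rfl | hSne
      · refine ⟨∅, flat_empty_loopless hloop, by simp, ?_, ?_, by simp⟩
        · rw [Set.empty_ssubset]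
          exact ground_nonempty_of_rk hr (by omega)
        · intro h
          rw [rkN_empty]
          simp [hk]
      · obtain ⟨F₀, hF₀S, hF₀max⟩ := Finset.exists_max_image S (fun F => rkN M F.1) hSne
        have hsub : ∀ F ∈ S, F.1 ⊆ F₀.1 := by
          intro F hF
          rcases hflag F hF F₀ hF₀S with h | h
          · exact h
          · exact (rkN_flat_strictmono_le hfin F₀.2.1 F.2.1 h (hF₀max F hF)).symm.subset
        refine ⟨F₀.1, F₀.2.1, hsub, ?_, ?_, fun H hH => (hH F₀ hF₀S).subset⟩
        · exact (HasSubset.Subset.ssubset_of_ne F₀.2.1.subset_ground F₀.2.2.2)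
        · intro himg
          have hk1 : 1 ≤ k := by
            rw [hk]
            exact Finset.card_pos.2 hSne
          have hmem : k ∈ S.image (fun F => rkN M F.1) := by
            rw [himg, Finset.mem_Icc]
            omega
          rw [Finset.mem_image] at hmem
          obtain ⟨F₁, hF₁S, hF₁rk⟩ := hmem
          have h1 : rkN M F₀.1 ≤ k := by
            have : rkN M F₀.1 ∈ Finset.Icc 1 k := by
              rw [← himg]
              exact Finset.mem_image_of_mem _ hF₀S
            rw [Finset.mem_Icc] at this
            exact this.2
          have h2 := hF₀max F₁ hF₁S
          omega
    obtain ⟨G, hGflat, hGsub, hGE, hGrk, hGmin⟩ := hGex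
    obtain ⟨j', hj'E, hj'G⟩ := Set.exists_of_ssubset hGE
    have hmem : ∀ F ∈ S, j' ∉ F.1 := fun F hF h => hj'G (hGsub F hF h)
    have hexp : mon M S * alpha ℤ M i ^ (a + 1)
        = ∑ H ∈ Finset.univ.filter
            (fun H : FlatIdx M => j' ∈ H.1 ∧ ∀ F ∈ S, F.1 ⊂ H.1),
          mon M (insert H S) * alpha ℤ M i ^ a := by
      have h1 : mon M S * alpha ℤ M i ^ (a + 1)
          = (alpha ℤ M i * mon M S) * alpha ℤ M i ^ a := by
        ring
      rw [h1, alpha_mul_mon hfin hi hj'E hmem, Finset.sum_mul]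
    rw [hexp, map_sum]
    have hterm : ∀ H ∈ Finset.univ.filter
        (fun H : FlatIdx M => j' ∈ H.1 ∧ ∀ F ∈ S, F.1 ⊂ H.1),
        deg (mon M (insert H S) * alpha ℤ M i ^ a)
          = if (insert H S).image (fun F => rkN M F.1) = Finset.Icc 1 (k+1)
            then (1 : ℤ) else 0 := by
      intro H hH
      rw [Finset.mem_filter] at hH
      obtain ⟨-, hj'H, hHgt⟩ := hH
      have hHS : H ∉ S := fun h => (hHgt H h).ne rfl
      have hflag' : IsFlagIdx M (insert H S) := by
        intro F hF F' hF'
        rcases Finset.mem_insert.1 hF with hFH | hF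
        · rcases Finset.mem_insert.1 hF' with hF'H | hF'
          · rw [hFH, hF'H]
            exact Or.inl subset_rfl
          · rw [hFH]
            exact Or.inr (hHgt F' hF').subset
        · rcases Finset.mem_insert.1 hF' with hF'H | hF'
          · rw [hF'H]
            exact Or.inl (hHgt F hF).subset
          · exact hflag F hF F' hF'
      have hcard' : a + (insert H S).card = r - 1 := by
        rw [Finset.card_insert_of_notMem hHS]
        omega
      rw [iha (insert H S) hflag' hcard', Finset.card_insert_of_notMem hHS]
    rw [Finset.sum_congr rfl hterm]
    -- now the count
    have hrkHnew : ∀ H : FlatIdx M, (∀ F ∈ S, F.1 ⊂ H.1) →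
        ((insert H S).image (fun F => rkN M F.1) = Finset.Icc 1 (k+1)) →
        rkN M H.1 = k + 1 ∧ S.image (fun F => rkN M F.1) = Finset.Icc 1 k := by
      intro H hHgt hicc
      have hHS : H ∉ S := fun h => (hHgt H h).ne rfl
      have hlt : ∀ F ∈ S, rkN M F.1 < rkN M H.1 :=
        fun F hF => rkN_flat_lt hfin F.2.1 H.2.1 (hHgt F hF)
      have himgins : (insert H S).image (fun F => rkN M F.1)
          = insert (rkN M H.1) (S.image (fun F => rkN M F.1)) := Finset.image_insert _ _ _
      have hHrk : rkN M H.1 = k + 1 := by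
        have hin : (k+1) ∈ (insert H S).image (fun F => rkN M F.1) := by
          rw [hicc, Finset.mem_Icc]
          omega
        rw [Finset.mem_image] at hin
        obtain ⟨F₀, hF₀, hF₀rk⟩ := hin
        rcases Finset.mem_insert.1 hF₀ with h | h
        · rw [← h]
          exact hF₀rk
        · have h1 := hlt F₀ h
          have h2 : rkN M H.1 ∈ Finset.Icc 1 (k+1) := by
            rw [← hicc, himgins]
            exact Finset.mem_insert_self _ _
          rw [Finset.mem_Icc] at h2
          omega
      refine ⟨hHrk, ?_⟩
      have hnotmem : rkN M H.1 ∉ S.image (fun F => rkN M F.1) := by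
        rw [Finset.mem_image]
        rintro ⟨F, hF, hFrk⟩
        have := hlt F hF
        omega
      have : S.image (fun F => rkN M F.1)
          = ((insert H S).image (fun F => rkN M F.1)).erase (rkN M H.1) := by
        rw [himgins, Finset.erase_insert hnotmem]
      rw [this, hicc, hHrk]
      ext n
      simp only [Finset.mem_erase, Finset.mem_Icc]
      omega
    by_cases himg : S.image (fun F => rkN M F.1) = Finset.Icc 1 k
    · rw [if_pos himg]
      have hrkG : rkN M G = k := hGrk himg
      set K' : Set α := M.closure (insert j' G) with hK'
      have hK'flat : M.IsFlat K' := closure_flat' M _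
      have hK'rk : rkN M K' = k + 1 := by
        rw [hK', rkN_closure_insert hfin hGflat hj'E hj'G, hrkG]
      have hsubK' : insert j' G ⊆ K' :=
        M.subset_closure _ (Set.insert_subset hj'E hGflat.subset_ground)
      have hK'P : PFlat M K' := by
        refine ⟨hK'flat, ⟨j', hsubK' (Set.mem_insert _ _)⟩, ?_⟩
        intro h
        rw [h, hr] at hK'rk
        omega
      set Kidx : FlatIdx M := ⟨K', hK'P⟩ with hKidx
      have hsingleton : (Finset.univ.filter
          (fun H : FlatIdx M => j' ∈ H.1 ∧ ∀ F ∈ S, F.1 ⊂ H.1)).filter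
          (fun H => (insert H S).image (fun F => rkN M F.1) = Finset.Icc 1 (k+1))
          = {Kidx} := by
        rw [Finset.eq_singleton_iff_unique_mem]
        constructor
        · rw [Finset.mem_filter, Finset.mem_filter]
          have hgt : ∀ F ∈ S, F.1 ⊂ K' := by
            intro F hF
            refine HasSubset.Subset.ssubset_of_ne
              ((hGsub F hF).trans ((Set.subset_insert _ _).trans hsubK')) ?_
            intro h
            exact (hmem F hF) (h ▸ hsubK' (Set.mem_insert _ _))
          refine ⟨⟨Finset.mem_univ _, hsubK' (Set.mem_insert _ _), hgt⟩, ?_⟩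
          have hKS : Kidx ∉ S := fun h => (hgt Kidx h).ne rfl
          rw [Finset.image_insert, himg]
          have : rkN M Kidx.1 = k + 1 := hK'rk
          rw [this]
          ext n
          simp only [Finset.mem_insert, Finset.mem_Icc]
          omega
        · intro H hH
          rw [Finset.mem_filter, Finset.mem_filter] at hH
          obtain ⟨⟨-, hj'H, hHgt⟩, hicc⟩ := hH
          obtain ⟨hHrk, -⟩ := hrkHnew H hHgt hicc
          have hK'subH : K' ⊆ H.1 := by
            rw [hK']
            exact flat_subset_of_subset H.2.1 (Set.insert_subset hj'H (hGmin H hHgt))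
          refine Subtype.coe_injective ?_
          show H.1 = K'
          exact (rkN_flat_strictmono_le hfin hK'flat H.2.1 hK'subH (by omega)).symm
      rw [Finset.sum_boole, hsingleton, Finset.card_singleton]
      norm_num
    · rw [if_neg himg]
      have hzero : ∀ H ∈ Finset.univ.filter
          (fun H : FlatIdx M => j' ∈ H.1 ∧ ∀ F ∈ S, F.1 ⊂ H.1),
          (if (insert H S).image (fun F => rkN M F.1) = Finset.Icc 1 (k+1)
            then (1 : ℤ) else 0) = 0 := by
        intro H hH
        rw [Finset.mem_filter] at hH
        rw [if_neg]
        intro hicc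
        exact himg (hrkHnew H hH.2.2 hicc).2
      rw [Finset.sum_congr rfl hzero, Finset.sum_const_zero]


lemma degC [Fintype (FlatIdx M)] (hfin : M.E.Finite) (hloop : Loopless M)
    (hr : rkN M M.E = r) (hi : i ∈ M.E) (hdeg : IsDegMap ℤ M r deg) :
    ∀ b a : ℕ, ∀ S : Finset (FlatIdx M), IsFlagIdx M S → ∀ G : Set α, M.IsFlat G →
      (∀ F ∈ S, G ⊆ F.1) →
      ((S = ∅ ∧ G = M.E) ∨ (∃ h : PFlat M G, (⟨G, h⟩ : FlatIdx M) ∈ S)) →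
      a + b + S.card = r - 1 →
      deg (mon M S * alpha ℤ M i ^ a * beta ℤ M i ^ b)
        = if S.image (fun F => rkN M F.1) = Finset.Icc (b+1) (b + S.card)
          then (-1 : ℤ)^b * Qc M hfin b G else 0 := by
  classical
  intro b
  induction b with
  | zero =>
    intro a S hflag G hGflat hGsub hGmem hcard
    rw [pow_zero, mul_one, degA hfin hloop hr hi hdeg a S hflag (by omega),
      Qc_zero hfin hloop]
    simp only [zero_add, pow_zero, one_mul, mul_one]
  | succ b ihb =>
    intro a S hflag G hGflat hGsub hGmem hcard
    set k := S.card with hk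
    have hGne : G.Nonempty := by
      rcases hGmem with ⟨-, hGE⟩ | ⟨h, -⟩
      · rw [hGE]
        exact ground_nonempty_of_rk hr (by omega)
      · exact h.2.1
    obtain ⟨i', hi'G⟩ := hGne
    have hi'E : i' ∈ M.E := hGflat.subset_ground hi'G
    have hmem : ∀ F ∈ S, i' ∈ F.1 := fun F hF => hGsub F hF hi'G
    have h1 : mon M S * alpha ℤ M i ^ a * beta ℤ M i ^ (b+1)
        = (beta ℤ M i * mon M S) * alpha ℤ M i ^ a * beta ℤ M i ^ b := by
      ring
    rw [h1, beta_mul_mon hfin hi hi'E hmem, Finset.sum_mul, Finset.sum_mul, map_sum]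
    set goodβ := Finset.univ.filter
      (fun H : FlatIdx M => i' ∉ H.1 ∧ ∀ F ∈ S, H.1 ⊂ F.1) with hgoodβ
    have hgoodfact : ∀ H ∈ goodβ, i' ∉ H.1 ∧ ∀ F ∈ S, H.1 ⊂ F.1 := by
      intro H hH
      rw [hgoodβ, Finset.mem_filter] at hH
      exact hH.2
    have hterm : ∀ H ∈ goodβ,
        deg (mon M (insert H S) * alpha ℤ M i ^ a * beta ℤ M i ^ b)
          = if (insert H S).image (fun F => rkN M F.1)
              = Finset.Icc (b+1) (b + (k+1))
            then (-1 : ℤ)^b * Qc M hfin b H.1 else 0 := by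
      intro H hH
      obtain ⟨hi'H, hHlt⟩ := hgoodfact H hH
      have hHS : H ∉ S := fun h => (hHlt H h).ne rfl
      have hflag' : IsFlagIdx M (insert H S) := by
        intro F hF F' hF'
        rcases Finset.mem_insert.1 hF with hFH | hF
        · rcases Finset.mem_insert.1 hF' with hF'H | hF'
          · rw [hFH, hF'H]
            exact Or.inl subset_rfl
          · rw [hFH]
            exact Or.inl (hHlt F' hF').subset
        · rcases Finset.mem_insert.1 hF' with hF'H | hF'
          · rw [hF'H]
            exact Or.inr (hHlt F hF).subset
          · exact hflag F hF F' hF'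
      have hmin' : ∀ F ∈ insert H S, H.1 ⊆ F.1 := by
        intro F hF
        rcases Finset.mem_insert.1 hF with hFH | hF
        · rw [hFH]
        · exact (hHlt F hF).subset
      have hmem' : (insert H S = ∅ ∧ H.1 = M.E) ∨
          (∃ h : PFlat M H.1, (⟨H.1, h⟩ : FlatIdx M) ∈ insert H S) :=
        Or.inr ⟨H.2, Finset.mem_insert_self H S⟩
      have hcard' : a + b + (insert H S).card = r - 1 := by
        rw [Finset.card_insert_of_notMem hHS]
        omega
      rw [ihb a (insert H S) hflag' H.1 H.2.1 hmin' hmem' hcard',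
        Finset.card_insert_of_notMem hHS]
    rw [Finset.sum_congr rfl hterm]
    have hrkHnewβ : ∀ H : FlatIdx M, (∀ F ∈ S, H.1 ⊂ F.1) →
        ((insert H S).image (fun F => rkN M F.1) = Finset.Icc (b+1) (b + (k+1))) →
        rkN M H.1 = b + 1 ∧
          S.image (fun F => rkN M F.1) = Finset.Icc (b+1+1) (b+1+k) := by
      intro H hHlt hicc
      have hHS : H ∉ S := fun h => (hHlt H h).ne rfl
      have hlt : ∀ F ∈ S, rkN M H.1 < rkN M F.1 :=
        fun F hF => rkN_flat_lt hfin H.2.1 F.2.1 (hHlt F hF)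
      have himgins : (insert H S).image (fun F => rkN M F.1)
          = insert (rkN M H.1) (S.image (fun F => rkN M F.1)) := Finset.image_insert _ _ _
      have hHrk : rkN M H.1 = b + 1 := by
        have hin : (b+1) ∈ (insert H S).image (fun F => rkN M F.1) := by
          rw [hicc, Finset.mem_Icc]
          omega
        rw [Finset.mem_image] at hin
        obtain ⟨F₀, hF₀, hF₀rk⟩ := hin
        have h2 : rkN M H.1 ∈ Finset.Icc (b+1) (b + (k+1)) := by
          rw [← hicc, himgins]
          exact Finset.mem_insert_self _ _
        rw [Finset.mem_Icc] at h2
        rcases Finset.mem_insert.1 hF₀ with h | h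
        · rw [← h]
          exact hF₀rk
        · have h1 := hlt F₀ h
          omega
      refine ⟨hHrk, ?_⟩
      have hnotmem : rkN M H.1 ∉ S.image (fun F => rkN M F.1) := by
        rw [Finset.mem_image]
        rintro ⟨F, hF, hFrk⟩
        have := hlt F hF
        omega
      have he : S.image (fun F => rkN M F.1)
          = ((insert H S).image (fun F => rkN M F.1)).erase (rkN M H.1) := by
        rw [himgins, Finset.erase_insert hnotmem]
      rw [he, hicc, hHrk]
      ext n
      simp only [Finset.mem_erase, Finset.mem_Icc]
      omega
    by_cases himg : S.image (fun F => rkN M F.1) = Finset.Icc (b+1+1) (b+1+k)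
    · rw [if_pos himg]
      have hrkG : b + 1 < rkN M G := by
        rcases hGmem with ⟨hSe, hGE⟩ | ⟨h, hGS⟩
        · rw [hGE, hr]
          have hk0 : k = 0 := by rw [hk, hSe, Finset.card_empty]
          omega
        · have : rkN M G ∈ Finset.Icc (b+1+1) (b+1+k) := by
            rw [← himg]
            exact Finset.mem_image_of_mem _ hGS
          rw [Finset.mem_Icc] at this
          omega
      have hcond : ∀ H ∈ goodβ,
          ((insert H S).image (fun F => rkN M F.1) = Finset.Icc (b+1) (b + (k+1)))
            ↔ rkN M H.1 = b + 1 := by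
        intro H hH
        obtain ⟨hi'H, hHlt⟩ := hgoodfact H hH
        constructor
        · intro hicc
          exact (hrkHnewβ H hHlt hicc).1
        · intro hHrk
          have hHS : H ∉ S := fun h => (hHlt H h).ne rfl
          rw [Finset.image_insert, himg, hHrk]
          ext n
          simp only [Finset.mem_insert, Finset.mem_Icc]
          omega
      have hite : ∀ H ∈ goodβ,
          (if (insert H S).image (fun F => rkN M F.1) = Finset.Icc (b+1) (b + (k+1))
            then (-1 : ℤ)^b * Qc M hfin b H.1 else 0)
          = if rkN M H.1 = b + 1 then (-1 : ℤ)^b * Qc M hfin b H.1 else 0 := by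
        intro H hH
        rw [if_congr (hcond H hH) rfl rfl]
      rw [Finset.sum_congr rfl hite, ← Finset.sum_filter]
      have hfilteq : goodβ.filter (fun H => rkN M H.1 = b + 1)
          = Finset.univ.filter
            (fun H : FlatIdx M => rkN M H.1 = b + 1 ∧ H.1 ⊂ G ∧ i' ∉ H.1) := by
        ext H
        rw [Finset.mem_filter, hgoodβ, Finset.mem_filter, Finset.mem_filter]
        constructor
        · rintro ⟨⟨-, hi'H, hHlt⟩, hHrk⟩
          refine ⟨Finset.mem_univ _, hHrk, ?_, hi'H⟩
          rcases hGmem with ⟨-, hGE⟩ | ⟨h, hGS⟩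
          · rw [hGE]
            exact HasSubset.Subset.ssubset_of_ne H.2.1.subset_ground H.2.2.2
          · exact hHlt _ hGS
        · rintro ⟨-, hHrk, hHG, hi'H⟩
          refine ⟨⟨Finset.mem_univ _, hi'H, ?_⟩, hHrk⟩
          intro F hF
          exact lt_of_lt_of_le hHG (hGsub F hF)
      rw [hfilteq, ← Finset.mul_sum]
      have hU := Qc_U (i' := i') hfin hloop (b := b+1) (by omega) hGflat hi'G hrkG
      simp only [Nat.add_sub_cancel] at hU
      rw [hU]
      ring
    · rw [if_neg himg]
      have hzero : ∀ H ∈ goodβ,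
          (if (insert H S).image (fun F => rkN M F.1) = Finset.Icc (b+1) (b + (k+1))
            then (-1 : ℤ)^b * Qc M hfin b H.1 else 0) = 0 := by
        intro H hH
        rw [if_neg]
        intro hicc
        exact himg (hrkHnewβ H (hgoodfact H hH).2 hicc).2
      rw [Finset.sum_congr rfl hzero, Finset.sum_const_zero]

end Degree

/-- For a loopless matroid of rank `r` and `0 ≤ d < r`:
`deg_M(α^{r-1-d} β^d) = (-1)^d ∑_{I ⊆ [d]} (-1)^{|I|} N_I`. -/
theorem stmt1 (M : Matroid α) (hfin : M.E.Finite) (hloop : Loopless M)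
    (r : ℕ) (hr : rkN M M.E = r) (d : ℕ) (hdr : d < r)
    (i : α) (hi : i ∈ M.E)
    (deg : Chow ℤ M →ₗ[ℤ] ℤ) (hdeg : IsDegMap ℤ M r deg) :
    deg ((alpha ℤ M i) ^ (r - 1 - d) * (beta ℤ M i) ^ d)
      = (-1) ^ d * ∑ I ∈ (Finset.Icc 1 d).powerset, (-1 : ℤ) ^ I.card * (Ncount M I : ℤ) := by
  classical
  haveI : Finite (FlatIdx M) := flatIdx_finite hfin
  haveI : Fintype (FlatIdx M) := Fintype.ofFinite _
  have hD := degC hfin hloop hr hi hdeg d (r - 1 - d) ∅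
    (fun F hF => absurd hF (Finset.notMem_empty F)) M.E M.ground_isFlat
    (fun F hF => absurd hF (Finset.notMem_empty F)) (Or.inl ⟨rfl, rfl⟩)
    (by rw [Finset.card_empty]; omega)
  have hmon : mon M (∅ : Finset (FlatIdx M)) * alpha ℤ M i ^ (r - 1 - d)
      * beta ℤ M i ^ d = alpha ℤ M i ^ (r - 1 - d) * beta ℤ M i ^ d := by
    rw [mon_empty, one_mul]
  rw [hmon] at hD
  have hcond : (∅ : Finset (FlatIdx M)).image (fun F => rkN M F.1)
      = Finset.Icc (d+1) (d + (∅ : Finset (FlatIdx M)).card) := by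
    rw [Finset.image_empty, Finset.card_empty]
    exact (Finset.Icc_eq_empty (by omega)).symm
  rw [hD, if_pos hcond]
  congr 1
  -- Qc d M.E = ∑ I, (-1)^|I| * Ncount I
  have hmaps : ∀ 𝓕 ∈ FlagsB M hfin d M.E, 𝓕.image (rkN M) ∈ (Finset.Icc 1 d).powerset := by
    intro 𝓕 h𝓕
    rw [mem_FlagsB] at h𝓕
    rw [Finset.mem_powerset]
    intro n hn
    rw [Finset.mem_image] at hn
    obtain ⟨F, hF, rfl⟩ := hn
    rw [Finset.mem_Icc]
    exact ⟨PFlat.one_le_rkN hfin hloop (h𝓕.1.1 F hF), (h𝓕.2 F hF).2⟩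
  rw [Qc, ← Finset.sum_fiberwise_of_maps_to hmaps]
  refine Finset.sum_congr rfl (fun I hI => ?_)
  rw [Finset.mem_powerset] at hI
  have hfib : ∀ 𝓕 ∈ (FlagsB M hfin d M.E).filter (fun 𝓕 => 𝓕.image (rkN M) = I),
      ((-1 : ℤ)) ^ 𝓕.card = (-1 : ℤ) ^ I.card := by
    intro 𝓕 h𝓕
    rw [Finset.mem_filter, mem_FlagsB] at h𝓕
    have hinj : ∀ F ∈ 𝓕, ∀ F' ∈ 𝓕, rkN M F = rkN M F' → F = F' := by
      intro F hF F' hF' h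
      exact flag_eq_of_comparable hfin (h𝓕.1.1.1 F hF).1 (h𝓕.1.1.1 F' hF').1
        (h𝓕.1.1.2 F hF F' hF') h
    rw [← h𝓕.2, Finset.card_image_of_injOn hinj]
  rw [Finset.sum_congr rfl hfib, Finset.sum_const, nsmul_eq_mul]
  have hN : (Ncount M I : ℤ)
      = (((FlagsB M hfin d M.E).filter (fun 𝓕 => 𝓕.image (rkN M) = I)).card : ℤ) := by
    have hset : {S : Finset (Set α) | IsFlagF M S ∧ S.image (rkN M) = I}
        = ↑((FlagsB M hfin d M.E).filter (fun 𝓕 => 𝓕.image (rkN M) = I)) := by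
      ext S
      rw [Set.mem_setOf_eq, Finset.mem_coe, Finset.mem_filter, mem_FlagsB]
      constructor
      · rintro ⟨hSflag, hSimg⟩
        refine ⟨⟨hSflag, fun F hF => ⟨?_, ?_⟩⟩, hSimg⟩
        · exact HasSubset.Subset.ssubset_of_ne (hSflag.1 F hF).1.subset_ground
            (hSflag.1 F hF).2.2
        · have : rkN M F ∈ I := by
            rw [← hSimg]
            exact Finset.mem_image_of_mem _ hF
          have := hI this
          rw [Finset.mem_Icc] at this
          exact this.2
      · rintro ⟨⟨hSflag, -⟩, hSimg⟩
        exact ⟨hSflag, hSimg⟩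
    rw [Ncount, hset, Set.ncard_coe_finset]
  rw [hN]
  ring

end ChowPaper
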